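/- arXiv:2311.13909 — 2 statements merged into one kernel-verified Lean document; each statement's English description precedes it below -/
import Mathlib

section
/- The two-dimensional square-squeezing map σ*(x₁,x₂) = (x₁ - x₁x₂/2, x₂ - x₁x₂/2) maps the unit square [0,1]² onto the standard 2-simplex △₂ = {(u,v) : u ≥ 0, v ≥ 0, u + v ≤ 1}. -/
/-! In the coordinates `a = 1 - x₁`, `b = 1 - x₂` the map reads
`u + v = 1 - a b` and `v - u = a - b`. So inverting it on the simplex amounts to finding
`a, b ∈ [0, 1]` with prescribed product `s = 1 - u - v` and difference `d = v - u`; they are the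
roots `(±d + √(d² + 4s)) / 2`, which lie in `[0, 1]` exactly because `|d| + s ≤ 1`. -/

lemma exists_mem_Icc_mul_eq_sub_eq {s d : ℝ} (hs : 0 ≤ s) (h : |d| + s ≤ 1) :
    ∃ a ∈ Set.Icc (0 : ℝ) 1, ∃ b ∈ Set.Icc (0 : ℝ) 1, a * b = s ∧ a - b = d := by
  set r := √(d ^ 2 + 4 * s)
  have hr_sq : r ^ 2 = d ^ 2 + 4 * s := Real.sq_sqrt (by positivity)
  have hd_le_r : |d| ≤ r := Real.abs_le_sqrt (by linarith)
  have hr_le : r ≤ 2 - |d| := by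
    rw [Real.sqrt_le_iff]
    constructor
    · linarith [abs_nonneg d]
    · nlinarith [sq_abs d]
  obtain ⟨hd_lo, hd_hi⟩ := abs_le.mp hd_le_r
  refine ⟨(r + d) / 2, ⟨by linarith, by linarith [le_abs_self d]⟩,
    (r - d) / 2, ⟨by linarith, by linarith [neg_abs_le d]⟩, ?_, by ring⟩
  linear_combination hr_sq / 4

/-- The 2D square-squeezing map `σ*(x₁,x₂) = (x₁ - x₁x₂/2, x₂ - x₁x₂/2)`
maps the unit square `[0,1]²` onto the standard 2-simplex. -/
theorem square_squeezing_maps_onto_simplex :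
    (fun p : ℝ × ℝ => (p.1 - p.1 * p.2 / 2, p.2 - p.1 * p.2 / 2)) ''
      (Set.Icc 0 1 ×ˢ Set.Icc 0 1)
    = {q : ℝ × ℝ | 0 ≤ q.1 ∧ 0 ≤ q.2 ∧ q.1 + q.2 ≤ 1} := by
  ext ⟨u, v⟩
  constructor
  · rintro ⟨⟨x, y⟩, ⟨⟨hx0, hx1⟩, hy0, hy1⟩, hxy⟩
    simp only [Prod.mk.injEq] at hxy
    obtain ⟨rfl, rfl⟩ := hxy
    refine ⟨?_, ?_, ?_⟩ <;> nlinarith [mul_nonneg (sub_nonneg.2 hx1) (sub_nonneg.2 hy1)]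
  · rintro ⟨hu, hv, huv⟩
    have hd : |v - u| + (1 - u - v) ≤ 1 := by
      linarith [abs_le.2 (⟨by linarith, by linarith⟩ : -(u + v) ≤ v - u ∧ v - u ≤ u + v)]
    obtain ⟨a, ⟨ha0, ha1⟩, b, ⟨hb0, hb1⟩, hab, ha_sub_b⟩ :=
      exists_mem_Icc_mul_eq_sub_eq (by linarith) hd
    refine ⟨(1 - a, 1 - b), ⟨⟨by linarith, by linarith⟩, by linarith, by linarith⟩, ?_⟩
    simp only [Prod.mk.injEq]
    exact ⟨by linear_combination (-hab - ha_sub_b) / 2, by linear_combination (-hab + ha_sub_b) / 2⟩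
end

section
/- The two-dimensional square-squeezing map σ*(x₁,x₂) = (x₁ - x₁x₂/2, x₂ - x₁x₂/2) is injective on the unit square [0,1]². -/
/-!
The squeezing map preserves `x₁ - x₂`. Given that, equality of first coordinates factors as
`(a - c) * (2 - a - d) = 0`, and for `a, d ≤ 1` we have `a + d = 2` only at `a = d = 1`, where the
preserved difference forces `b = c = 1` as well.
-/

lemma sub_eq_sub_of_squeeze_eq {a b c d : ℝ} (h₁ : a - a * b / 2 = c - c * d / 2)
    (h₂ : b - a * b / 2 = d - c * d / 2) : a - b = c - d := by
  linarith

lemma sub_mul_two_sub_eq_zero_of_squeeze_eq {a b c d : ℝ} (h₁ : a - a * b / 2 = c - c * d / 2)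
    (h₂ : b - a * b / 2 = d - c * d / 2) : (a - c) * (2 - a - d) = 0 := by
  linear_combination 2 * h₁ - a * (h₁ - h₂)

lemma squeezing_injOn_Iic_prod_Iic :
    Set.InjOn (fun p : ℝ × ℝ => (p.1 - p.1 * p.2 / 2, p.2 - p.1 * p.2 / 2))
      (Set.Iic 1 ×ˢ Set.Iic 1) := by
  rintro ⟨a, b⟩ ⟨ha : a ≤ 1, hb : b ≤ 1⟩ ⟨c, d⟩ ⟨hc : c ≤ 1, hd : d ≤ 1⟩ heq
  obtain ⟨h₁, h₂⟩ := Prod.mk.inj heq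
  have hdiff := sub_eq_sub_of_squeeze_eq h₁ h₂
  have hac : a = c := by
    rcases mul_eq_zero.1 (sub_mul_two_sub_eq_zero_of_squeeze_eq h₁ h₂) with h | h
    · linarith
    · linarith
  exact Prod.ext hac (by linarith)

/-- The 2D square-squeezing map is injective on the unit square `[0,1]²`. -/
theorem square_squeezing_injOn :
    Set.InjOn (fun p : ℝ × ℝ => (p.1 - p.1 * p.2 / 2, p.2 - p.1 * p.2 / 2))
      (Set.Icc 0 1 ×ˢ Set.Icc 0 1) :=
  squeezing_injOn_Iic_prod_Iic.mono <|
    Set.prod_mono Set.Icc_subset_Iic_self Set.Icc_subset_Iic_self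
end
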